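/- Correctness of backtracking pruning along sequence/fork positions: define SeqForkSub to be the smallest relation on process trees such that SeqForkSub P P for every P; SeqForkSub (seq P₁ P₂) Q whenever SeqForkSub P₁ Q or SeqForkSub P₂ Q; and SeqForkSub (fork Ps) Q whenever SeqForkSub Pᵢ Q for some Pᵢ in Ps. If every operation value s and e occurring in the process tree P is nonnegative and every loop multiplier and routing probability occurring in P is nonnegative, then for every Q with SeqForkSub P Q one has S(P) ≥ S(Q) and E(P) ≥ E(Q). Consequently, if a sub-composition Q reached only through sequences and forks already violates an SLA bound (S(Q) > MaxS or E(Q) > MaxE), then the whole composition P violates that bound, so no completion of the corresponding partial assignment can be feasible. -/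

import Mathlib

inductive PTree : Type
  | op : ℝ → ℝ → PTree
  | seq : PTree → PTree → PTree
  | fork : List PTree → PTree
  | loop : ℝ → PTree → PTree
  | xor : List (ℝ × PTree) → PTree
  | ior : ℝ → ℝ → ℝ → PTree → PTree → PTree

theorem PTree.sizeOf_snd_lt (q : ℝ × PTree) : sizeOf q.2 < sizeOf q := by
  obtain ⟨a, b⟩ := q; simp only [Prod.mk.sizeOf_spec]; omega

noncomputable def S : PTree → ℝ
  | .op s _ => s
  | .seq P₁ P₂ => S P₁ + S P₂
  | .fork Ps => (Ps.attach.map (fun ⟨P, _⟩ => S P)).foldr max 0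
  | .loop m P => m * S P
  | .xor qs => (qs.attach.map (fun ⟨q, _⟩ => q.1 * S q.2)).sum
  | .ior p₁ p₂ pp P₁ P₂ => p₁ * S P₁ + p₂ * S P₂ + pp * max (S P₁) (S P₂)
decreasing_by all_goals
  simp_wf
  all_goals first
    | omega
    | (have := List.sizeOf_lt_of_mem ‹_ ∈ _›
       first
         | omega
         | (have := PTree.sizeOf_snd_lt ‹ℝ × PTree›; omega))

noncomputable def E : PTree → ℝ
  | .op _ e => e
  | .seq P₁ P₂ => E P₁ + E P₂
  | .fork Ps => (Ps.attach.map (fun ⟨P, _⟩ => E P)).sum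
  | .loop m P => m * E P
  | .xor qs => (qs.attach.map (fun ⟨q, _⟩ => q.1 * E q.2)).sum
  | .ior p₁ p₂ pp P₁ P₂ => p₁ * E P₁ + p₂ * E P₂ + pp * (E P₁ + E P₂)
decreasing_by all_goals
  simp_wf
  all_goals first
    | omega
    | (have := List.sizeOf_lt_of_mem ‹_ ∈ _›
       first
         | omega
         | (have := PTree.sizeOf_snd_lt ‹ℝ × PTree›; omega))

/-- Every operation value, loop multiplier and routing probability in the tree is nonnegative. -/
inductive Nonneg : PTree → Prop
  | op {s e : ℝ} : 0 ≤ s → 0 ≤ e → Nonneg (.op s e)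
  | seq {P₁ P₂ : PTree} : Nonneg P₁ → Nonneg P₂ → Nonneg (.seq P₁ P₂)
  | fork {Ps : List PTree} : (∀ P ∈ Ps, Nonneg P) → Nonneg (.fork Ps)
  | loop {m : ℝ} {P : PTree} : 0 ≤ m → Nonneg P → Nonneg (.loop m P)
  | xor {qs : List (ℝ × PTree)} : (∀ q ∈ qs, 0 ≤ q.1) → (∀ q ∈ qs, Nonneg q.2) →
      Nonneg (.xor qs)
  | ior {p₁ p₂ pp : ℝ} {P₁ P₂ : PTree} : 0 ≤ p₁ → 0 ≤ p₂ → 0 ≤ pp →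
      Nonneg P₁ → Nonneg P₂ → Nonneg (.ior p₁ p₂ pp P₁ P₂)

/-- `SeqForkSub P Q` : `Q` is a sub-composition of `P` reached only through sequences and forks. -/
inductive SeqForkSub : PTree → PTree → Prop
  | refl (P : PTree) : SeqForkSub P P
  | seqL {P₁ P₂ Q : PTree} : SeqForkSub P₁ Q → SeqForkSub (.seq P₁ P₂) Q
  | seqR {P₁ P₂ Q : PTree} : SeqForkSub P₂ Q → SeqForkSub (.seq P₁ P₂) Q
  | fork {Ps : List PTree} {P Q : PTree} : P ∈ Ps → SeqForkSub P Q → SeqForkSub (.fork Ps) Q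

/-! With nonnegative parameters every aggregation rule yields a nonnegative value, so `S` and `E`
are nonnegative. A sequence adds a nonnegative term to each measure, and a fork takes the maximum
(for `S`) or a sum of nonnegative terms (for `E`) over its branches, so each branch is bounded by
the whole; induction along `SeqForkSub` finishes. -/

theorem List.le_foldr_max {α : Type*} [LinearOrder α] (l : List α) (b : α) :
    b ≤ l.foldr max b := by
  induction l with
  | nil => exact le_rfl
  | cons a l ih => exact ih.trans (le_max_right a _)

@[simp] lemma S_op (s e : ℝ) : S (.op s e) = s := by rw [S]
@[simp] lemma S_seq (P₁ P₂ : PTree) : S (.seq P₁ P₂) = S P₁ + S P₂ := by rw [S]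
@[simp] lemma S_fork (Ps : List PTree) : S (.fork Ps) = (Ps.map S).foldr max 0 := by
  rw [S]; simp
@[simp] lemma S_loop (m : ℝ) (P : PTree) : S (.loop m P) = m * S P := by rw [S]
@[simp] lemma S_xor (qs : List (ℝ × PTree)) :
    S (.xor qs) = (qs.map fun q => q.1 * S q.2).sum := by
  rw [S]; simp [List.attach_map_val (f := fun q : ℝ × PTree => q.1 * S q.2)]
@[simp] lemma S_ior (p₁ p₂ pp : ℝ) (P₁ P₂ : PTree) :
    S (.ior p₁ p₂ pp P₁ P₂) = p₁ * S P₁ + p₂ * S P₂ + pp * max (S P₁) (S P₂) := by rw [S]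

@[simp] lemma E_op (s e : ℝ) : E (.op s e) = e := by rw [E]
@[simp] lemma E_seq (P₁ P₂ : PTree) : E (.seq P₁ P₂) = E P₁ + E P₂ := by rw [E]
@[simp] lemma E_fork (Ps : List PTree) : E (.fork Ps) = (Ps.map E).sum := by
  rw [E]; simp
@[simp] lemma E_loop (m : ℝ) (P : PTree) : E (.loop m P) = m * E P := by rw [E]
@[simp] lemma E_xor (qs : List (ℝ × PTree)) :
    E (.xor qs) = (qs.map fun q => q.1 * E q.2).sum := by
  rw [E]; simp [List.attach_map_val (f := fun q : ℝ × PTree => q.1 * E q.2)]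
@[simp] lemma E_ior (p₁ p₂ pp : ℝ) (P₁ P₂ : PTree) :
    E (.ior p₁ p₂ pp P₁ P₂) = p₁ * E P₁ + p₂ * E P₂ + pp * (E P₁ + E P₂) := by rw [E]

namespace Nonneg

lemma S_nonneg {P : PTree} (hP : Nonneg P) : 0 ≤ S P := by
  induction hP with
  | op hs _ => rwa [S_op]
  | seq _ _ ih₁ ih₂ => rw [S_seq]; exact add_nonneg ih₁ ih₂
  | fork _ _ => rw [S_fork]; exact List.le_foldr_max _ _
  | loop hm _ ih => rw [S_loop]; exact mul_nonneg hm ih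
  | xor hp _ ih =>
    rw [S_xor]
    exact List.sum_nonneg (List.forall_mem_map.2 fun q hq => mul_nonneg (hp q hq) (ih q hq))
  | @ior _ _ _ P₁ P₂ h₁ h₂ hp _ _ ih₁ ih₂ =>
    rw [S_ior]
    have : 0 ≤ max (S P₁) (S P₂) := le_max_of_le_left ih₁
    positivity

lemma E_nonneg {P : PTree} (hP : Nonneg P) : 0 ≤ E P := by
  induction hP with
  | op _ he => rwa [E_op]
  | seq _ _ ih₁ ih₂ => rw [E_seq]; exact add_nonneg ih₁ ih₂
  | fork _ ih => rw [E_fork]; exact List.sum_nonneg (List.forall_mem_map.2 ih)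
  | loop hm _ ih => rw [E_loop]; exact mul_nonneg hm ih
  | xor hp _ ih =>
    rw [E_xor]
    exact List.sum_nonneg (List.forall_mem_map.2 fun q hq => mul_nonneg (hp q hq) (ih q hq))
  | ior h₁ h₂ hp _ _ ih₁ ih₂ => rw [E_ior]; positivity

end Nonneg

lemma S_le_S_fork {Ps : List PTree} {P : PTree} (h : P ∈ Ps) : S P ≤ S (.fork Ps) := by
  rw [S_fork]
  exact List.le_max_of_le' 0 (List.mem_map_of_mem h) le_rfl

lemma E_le_E_fork {Ps : List PTree} {P : PTree} (hPs : ∀ P ∈ Ps, Nonneg P) (h : P ∈ Ps) :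
    E P ≤ E (.fork Ps) := by
  rw [E_fork]
  exact List.single_le_sum (List.forall_mem_map.2 fun P hP => (hPs P hP).E_nonneg)
    _ (List.mem_map_of_mem h)

namespace SeqForkSub

lemma S_le {P Q : PTree} (h : SeqForkSub P Q) (hP : Nonneg P) : S Q ≤ S P := by
  induction h with
  | refl => exact le_rfl
  | seqL _ ih =>
    cases hP with
    | seq h₁ h₂ => rw [S_seq]; exact le_add_of_le_of_nonneg (ih h₁) h₂.S_nonneg
  | seqR _ ih =>
    cases hP with
    | seq h₁ h₂ => rw [S_seq]; exact le_add_of_nonneg_of_le h₁.S_nonneg (ih h₂)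
  | fork hmem _ ih =>
    cases hP with
    | fork hPs => exact (ih (hPs _ hmem)).trans (S_le_S_fork hmem)

lemma E_le {P Q : PTree} (h : SeqForkSub P Q) (hP : Nonneg P) : E Q ≤ E P := by
  induction h with
  | refl => exact le_rfl
  | seqL _ ih =>
    cases hP with
    | seq h₁ h₂ => rw [E_seq]; exact le_add_of_le_of_nonneg (ih h₁) h₂.E_nonneg
  | seqR _ ih =>
    cases hP with
    | seq h₁ h₂ => rw [E_seq]; exact le_add_of_nonneg_of_le h₁.E_nonneg (ih h₂)
  | fork hmem _ ih =>
    cases hP with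
    | fork hPs => exact (ih (hPs _ hmem)).trans (E_le_E_fork hPs hmem)

end SeqForkSub

theorem seqForkSub_pruning (P : PTree) (hP : Nonneg P) :
    ∀ Q : PTree, SeqForkSub P Q →
      S Q ≤ S P ∧ E Q ≤ E P ∧
      (∀ MaxS : ℝ, MaxS < S Q → MaxS < S P) ∧
      (∀ MaxE : ℝ, MaxE < E Q → MaxE < E P) := by
  intro Q h
  have hS := h.S_le hP
  have hE := h.E_le hP
  exact ⟨hS, hE, fun _ hQ => hQ.trans_le hS, fun _ hQ => hQ.trans_le hE⟩
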